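/- (Noisy random Logan, deterministic core) Let f: Z_N → C, M, S ⊆ Z_N, ε, δ ≥ 0. Suppose ||f̂||_{L^1(S^c)} ≤ (ε/N)||f̂||_{L^1(Z_N)}, g satisfies ||f − g||_{L^1(M^c)} ≤ δN^{-1}||f||_{L^1(M^c)} and ||ĝ||_1 ≤ ||f̂||_1, and h = f − g satisfies the Talagrand-type bound ||(1_M h)^||_{L^1(S)} ≤ |S|^{1/2} N^{-1/2} C_T (log N log log N)^{1/2} ||(1_M h)^||_1 with |S| < N/(16 C_T² log N log log N). Then (1/|M|) Σ_{x∈M} |h(x)| ≤ (4ε + 2δ)·(1/N) Σ_{x∈Z_N} |f(x)|. -/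

import Mathlib

open Finset

/-- The discrete Fourier transform on `ZMod N`:
`f̂(ω) = N^{-1/2} ∑_x f(x) e^{-2πiωx/N}`. -/
noncomputable def dft {N : ℕ} [NeZero N] (f : ZMod N → ℂ) (ω : ZMod N) : ℂ :=
  (Real.sqrt N : ℂ)⁻¹ *
    ∑ x : ZMod N, f x * Complex.exp (-(2 * Real.pi * Complex.I) * ((ω.val * x.val : ℕ) : ℂ) / (N : ℂ))

/-- `||u||_{L^1(A)} = ∑_{x ∈ A} |u(x)|`. -/
noncomputable def l1 {N : ℕ} [NeZero N] (A : Finset (ZMod N)) (u : ZMod N → ℂ) : ℝ :=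
  ∑ x ∈ A, ‖u x‖

/-! Split `h = f - g` as `u + v` with `u = 1_M h`, `v = 1_{Mᶜ} h`. The Talagrand bound together with
the size of `S` says that `û` puts at most a quarter of its `ℓ¹` mass on `S`. Since `ĝ = f̂ - ĥ` has
no larger `ℓ¹` norm than `f̂`, the mass of `ĥ` off `S` is controlled by its mass on `S` plus twice
that of `f̂` off `S`; combining, `‖û‖₁ ≤ 4 ‖f̂‖_{L¹(Sᶜ)} + 2 ‖v̂‖₁`, and both terms are
`O(N^{-1/2} ‖f‖₁)` by the concentration and noise hypotheses. Fourier inversion turns this into the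
pointwise bound `|h(x)| ≤ N^{-1/2} ‖û‖₁` on `M`. -/

open scoped ZMod

section

variable {N : ℕ} [NeZero N]

lemma l1_nonneg (A : Finset (ZMod N)) (u : ZMod N → ℂ) : 0 ≤ l1 A u :=
  Finset.sum_nonneg fun _ _ => norm_nonneg _

lemma l1_add_l1_compl (S : Finset (ZMod N)) (u : ZMod N → ℂ) : l1 S u + l1 Sᶜ u = l1 univ u :=
  Finset.sum_add_sum_compl S _

lemma l1_le_l1_univ (A : Finset (ZMod N)) (u : ZMod N → ℂ) : l1 A u ≤ l1 univ u :=
  Finset.sum_le_sum_of_subset_of_nonneg (Finset.subset_univ A) fun _ _ _ => norm_nonneg _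

lemma l1_add_le (A : Finset (ZMod N)) (u v : ZMod N → ℂ) : l1 A (u + v) ≤ l1 A u + l1 A v := by
  simp only [l1, ← Finset.sum_add_distrib]
  exact Finset.sum_le_sum fun x _ => norm_add_le (u x) (v x)

lemma l1_sub_le (A : Finset (ZMod N)) (u v : ZMod N → ℂ) : l1 A (u - v) ≤ l1 A u + l1 A v := by
  simp only [l1, ← Finset.sum_add_distrib]
  exact Finset.sum_le_sum fun x _ => norm_sub_le (u x) (v x)

lemma l1_univ_ite_mem_zero (M : Finset (ZMod N)) (w : ZMod N → ℂ) :
    l1 univ (fun x => if x ∈ M then 0 else w x) = l1 Mᶜ w := by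
  rw [l1, ← Finset.sum_add_sum_compl M, Finset.sum_eq_zero fun x hx => by simp [hx], zero_add]
  exact Finset.sum_congr rfl fun x hx => by simp [Finset.mem_compl.1 hx]

lemma l1_compl_sub_le_of_l1_le (S : Finset (ZMod N)) {F G : ZMod N → ℂ}
    (hGF : l1 univ G ≤ l1 univ F) : l1 Sᶜ (F - G) ≤ l1 S (F - G) + 2 * l1 Sᶜ F := by
  have hS : l1 S F ≤ l1 S G + l1 S (F - G) := by
    simpa using l1_add_le S G (F - G)
  have hSc : l1 Sᶜ (F - G) ≤ l1 Sᶜ F + l1 Sᶜ G := l1_sub_le Sᶜ F G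
  linarith [l1_add_l1_compl S F, l1_add_l1_compl S G]

lemma l1_le_of_concentrated_of_l1_le (S : Finset (ZMod N)) {F G U V : ZMod N → ℂ}
    (hUV : F - G = U + V) (hGF : l1 univ G ≤ l1 univ F) (hU : l1 S U ≤ 1 / 4 * l1 univ U) :
    l1 univ U ≤ 4 * l1 Sᶜ F + 2 * l1 univ V := by
  have hUc : l1 Sᶜ U ≤ l1 Sᶜ (F - G) + l1 Sᶜ V := by
    simpa [hUV] using l1_sub_le Sᶜ (U + V) V
  have hFG : l1 S (F - G) ≤ l1 S U + l1 S V := hUV ▸ l1_add_le S U V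
  linarith [l1_compl_sub_le_of_l1_le S hGF, l1_add_l1_compl S U, l1_add_l1_compl S V]

lemma ZMod.norm_stdAddChar (j : ZMod N) : ‖ZMod.stdAddChar j‖ = 1 := Circle.norm_coe _

lemma dft_eq_inv_sqrt_smul_dft (u : ZMod N → ℂ) : dft u = ((√N : ℂ)⁻¹) • 𝓕 u := by
  ext ω
  simp only [dft, Pi.smul_apply, ZMod.dft_apply, smul_eq_mul]
  congr 1
  refine Finset.sum_congr rfl fun x _ => ?_
  have hx : -(x * ω) = ((-((ω.val * x.val : ℕ) : ℤ) : ℤ) : ZMod N) := by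
    push_cast; simp only [ZMod.natCast_val, ZMod.cast_id', id_eq]; ring
  rw [hx, ZMod.stdAddChar_coe, mul_comm]
  congr 2
  push_cast; ring

lemma dft_add (u v : ZMod N → ℂ) : dft (u + v) = dft u + dft v := by
  simp only [dft_eq_inv_sqrt_smul_dft, map_add, smul_add]

lemma dft_sub (u v : ZMod N → ℂ) : dft (u - v) = dft u - dft v := by
  simp only [dft_eq_inv_sqrt_smul_dft, map_sub, smul_sub]

lemma norm_dft_le (u : ZMod N → ℂ) (ω : ZMod N) : ‖dft u ω‖ ≤ (√N)⁻¹ * l1 univ u := by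
  rw [dft_eq_inv_sqrt_smul_dft, Pi.smul_apply, smul_eq_mul, norm_mul, norm_inv,
    Complex.norm_real, Real.norm_of_nonneg (Real.sqrt_nonneg _), ZMod.dft_apply]
  gcongr
  refine (norm_sum_le _ _).trans_eq (Finset.sum_congr rfl fun x _ => ?_)
  rw [norm_smul, ZMod.norm_stdAddChar, one_mul]

lemma l1_dft_le (u : ZMod N → ℂ) : l1 univ (dft u) ≤ √N * l1 univ u := by
  calc l1 univ (dft u) ≤ ∑ _ω : ZMod N, (√N)⁻¹ * l1 univ u :=
        Finset.sum_le_sum fun ω _ => norm_dft_le u ω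
    _ = √N * l1 univ u := by
        rw [Finset.sum_const, Finset.card_univ, ZMod.card, nsmul_eq_mul, ← mul_assoc,
          ← div_eq_mul_inv, Real.div_sqrt]

lemma norm_le_l1_dft (u : ZMod N → ℂ) (x : ZMod N) : ‖u x‖ ≤ (√N)⁻¹ * l1 univ (dft u) := by
  have hN : (0 : ℝ) < N := by exact_mod_cast Nat.pos_of_neZero N
  have hinv := congr_fun ((𝓕 : (ZMod N → ℂ) ≃ₗ[ℂ] _).symm_apply_apply u) x
  rw [ZMod.invDFT_apply] at hinv
  rw [← hinv, norm_smul, norm_inv, Complex.norm_natCast]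
  calc (N : ℝ)⁻¹ * ‖∑ j, ZMod.stdAddChar (j * x) • 𝓕 u j‖ ≤ (N : ℝ)⁻¹ * ∑ j, ‖𝓕 u j‖ := by
        gcongr
        refine (norm_sum_le _ _).trans_eq (Finset.sum_congr rfl fun j _ => ?_)
        rw [norm_smul, ZMod.norm_stdAddChar, one_mul]
    _ = (√N)⁻¹ * l1 univ (dft u) := by
        simp only [l1, dft_eq_inv_sqrt_smul_dft, Pi.smul_apply, smul_eq_mul, norm_mul, norm_inv,
          Complex.norm_real, Real.norm_of_nonneg (Real.sqrt_nonneg _), ← Finset.mul_sum]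
        rw [← mul_assoc, ← mul_inv, Real.mul_self_sqrt hN.le]

end

lemma sqrt_mul_inv_sqrt_mul_le_quarter {k n C L : ℝ} (hk : 0 ≤ k) (hn : 0 < n)
    (h : k < n / (16 * C ^ 2 * L)) : √k * (√n)⁻¹ * (C * √L) ≤ 1 / 4 := by
  have hD : 0 < 16 * C ^ 2 * L := by
    by_contra! hD
    exact (hk.trans_lt h).not_ge (div_nonpos_of_nonneg_of_nonpos hn.le hD)
  have hL : 0 < L := pos_of_mul_pos_right hD (by positivity)
  have hsq : (√k * (√n)⁻¹ * (C * √L)) ^ 2 = k * C ^ 2 * L / n := by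
    rw [mul_pow, mul_pow, mul_pow, inv_pow, Real.sq_sqrt hk, Real.sq_sqrt hn.le,
      Real.sq_sqrt hL.le]
    ring
  refine le_of_abs_le (abs_le_of_sq_le_sq ?_ (by norm_num))
  rw [hsq, div_le_iff₀ hn]
  rw [lt_div_iff₀ hD] at h
  nlinarith

lemma one_div_card_mul_sum_le {ι : Type*} {s : Finset ι} {a : ι → ℝ} {c : ℝ} (hc : 0 ≤ c)
    (ha : ∀ i ∈ s, a i ≤ c) : 1 / (s.card : ℝ) * ∑ i ∈ s, a i ≤ c := by
  rcases s.eq_empty_or_nonempty with rfl | hs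
  · simpa using hc
  · rw [one_div, inv_mul_le_iff₀ (by exact_mod_cast hs.card_pos)]
    simpa using Finset.sum_le_card_nsmul s a c ha

theorem stmt16_general {N : ℕ} [NeZero N] (f g : ZMod N → ℂ) (M S : Finset (ZMod N))
    (ε δ C_T : ℝ) (hε : 0 ≤ ε) (hδ : 0 ≤ δ)
    (hconc : l1 Sᶜ (dft f) ≤ ε / N * l1 univ (dft f))
    (hnoise : l1 Mᶜ (f - g) ≤ δ / N * l1 Mᶜ f)
    (hmin : l1 univ (dft g) ≤ l1 univ (dft f))
    (hTal : l1 S (dft fun x => if x ∈ M then (f - g) x else 0) ≤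
      Real.sqrt S.card * (Real.sqrt N)⁻¹ *
        (C_T * Real.sqrt (Real.log N * Real.log (Real.log N))) *
        l1 univ (dft fun x => if x ∈ M then (f - g) x else 0))
    (hS : (S.card : ℝ) <
      N / (16 * C_T ^ 2 * (Real.log N * Real.log (Real.log N)))) :
    (1 / (M.card : ℝ)) * ∑ x ∈ M, ‖f x - g x‖ ≤
      (4 * ε + 2 * δ) * (1 / N) * ∑ x : ZMod N, ‖f x‖ := by
  set u : ZMod N → ℂ := fun x => if x ∈ M then (f - g) x else 0
  set v : ZMod N → ℂ := fun x => if x ∈ M then 0 else (f - g) x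
  have hN : (0 : ℝ) < N := by exact_mod_cast Nat.pos_of_neZero N
  have hUV : dft f - dft g = dft u + dft v := by
    rw [← dft_sub, ← dft_add]
    congr 1
    ext x
    by_cases hx : x ∈ M <;> simp [u, v, hx]
  have hU : l1 S (dft u) ≤ 1 / 4 * l1 univ (dft u) :=
    hTal.trans (mul_le_mul_of_nonneg_right
      (sqrt_mul_inv_sqrt_mul_le_quarter (Nat.cast_nonneg _) hN hS) (l1_nonneg _ _))
  have hF : l1 Sᶜ (dft f) ≤ ε / N * (√N * l1 univ f) :=
    hconc.trans (by gcongr; exact l1_dft_le f)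
  have hV : l1 univ (dft v) ≤ √N * (δ / N * l1 univ f) := by
    refine (l1_dft_le v).trans (mul_le_mul_of_nonneg_left ?_ (Real.sqrt_nonneg _))
    rw [l1_univ_ite_mem_zero]
    exact hnoise.trans (by gcongr; exact l1_le_l1_univ _ f)
  have hcore := l1_le_of_concentrated_of_l1_le S hUV hmin hU
  refine one_div_card_mul_sum_le (by positivity) fun x hx => ?_
  calc ‖f x - g x‖ = ‖u x‖ := by simp [u, hx]
    _ ≤ (√N)⁻¹ * l1 univ (dft u) := norm_le_l1_dft u x
    _ ≤ (√N)⁻¹ * (4 * (ε / N * (√N * l1 univ f)) + 2 * (√N * (δ / N * l1 univ f))) := by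
        gcongr
        linarith
    _ = (4 * ε + 2 * δ) * (1 / N) * ∑ x : ZMod N, ‖f x‖ := by
        have : √(N : ℝ) ≠ 0 := (Real.sqrt_pos.2 hN).ne'
        simp only [l1]
        field_simp

/-- Noisy random Logan, deterministic core. -/
theorem stmt16 {N : ℕ} [NeZero N] (f g : ZMod N → ℂ) (M S : Finset (ZMod N))
    (ε δ C_T : ℝ) (hε : 0 ≤ ε) (hδ : 0 ≤ δ) (hCT : 0 < C_T)
    (hconc : l1 Sᶜ (dft f) ≤ ε / N * l1 univ (dft f))
    (hnoise : l1 Mᶜ (f - g) ≤ δ / N * l1 Mᶜ f)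
    (hmin : l1 univ (dft g) ≤ l1 univ (dft f))
    (hTal : l1 S (dft fun x => if x ∈ M then (f - g) x else 0) ≤
      Real.sqrt S.card * (Real.sqrt N)⁻¹ *
        (C_T * Real.sqrt (Real.log N * Real.log (Real.log N))) *
        l1 univ (dft fun x => if x ∈ M then (f - g) x else 0))
    (hS : (S.card : ℝ) <
      N / (16 * C_T ^ 2 * (Real.log N * Real.log (Real.log N)))) :
    (1 / (M.card : ℝ)) * ∑ x ∈ M, ‖f x - g x‖ ≤
      (4 * ε + 2 * δ) * (1 / N) * ∑ x : ZMod N, ‖f x‖ :=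
  stmt16_general f g M S ε δ C_T hε hδ hconc hnoise hmin hTal hS
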